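/- arXiv:1407.1968 — 2 statements merged into one kernel-verified Lean document; each statement's English description precedes it below -/
import Mathlib

section
/- For all integers i ≥ 0 and real parameters a, b, d with b ≥ 0 and d ≥ a ≥ 0, the polynomial product s_i(q)·s_{i+1}(q) − t_{i+1}(q) has only nonnegative coefficients as a polynomial in q, where s_i(q) = (di + ab) + (di + bd − ab)q and t_{i+1}(q) = d²(i+1)(i+b)q. -/
/-!
Expanding the product, the constant and quadratic coefficients are products of two factors
that are nonnegative because `a * b ≤ b * d`, and the coefficient of `q` simplifies to
`d² i (i + 1 + b) + 2 a b · b (d - a)`.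
-/

open Polynomial

namespace Polynomial

theorem C_add_C_mul_X_mul_C_add_C_mul_X_sub_C_mul_X {R : Type*} [CommRing R]
    (α β γ δ τ : R) :
    (C α + C β * X) * (C γ + C δ * X) - C τ * X =
      C (α * γ) + C (α * δ + β * γ - τ) * X + C (β * δ) * X ^ 2 := by
  simp only [map_add, map_mul, map_sub]
  ring

theorem coeff_C_add_C_mul_X_add_C_mul_X_sq_nonneg {R : Type*} [Semiring R] [PartialOrder R]
    [IsOrderedAddMonoid R] {c₀ c₁ c₂ : R} (h₀ : 0 ≤ c₀) (h₁ : 0 ≤ c₁) (h₂ : 0 ≤ c₂) (k : ℕ) :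
    0 ≤ (C c₀ + C c₁ * X + C c₂ * X ^ 2).coeff k := by
  rw [coeff_add, coeff_add, coeff_C, coeff_C_mul_X, coeff_C_mul_X_pow]
  split_ifs <;> simp only [add_zero, zero_add, le_refl, add_nonneg, *]

end Polynomial

/-- For all integers `i ≥ 0` and real `a, b, d` with `b ≥ 0` and `d ≥ a ≥ 0`,
the polynomial `s_i(q) * s_{i+1}(q) - t_{i+1}(q)` has only nonnegative coefficients,
where `s_i(q) = (d i + a b) + (d i + b d - a b) q` and
`t_{i+1}(q) = d^2 (i+1)(i+b) q`. -/
theorem stmt0 (a b d : ℝ) (hb : 0 ≤ b) (ha : 0 ≤ a) (had : a ≤ d) (i : ℕ) :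
    ∀ k : ℕ,
      0 ≤ (((C (d * i + a * b) + C (d * i + b * d - a * b) * X) *
            (C (d * (i + 1) + a * b) + C (d * (i + 1) + b * d - a * b) * X) -
            C (d ^ 2 * (i + 1) * (i + b)) * X : Polynomial ℝ)).coeff k := by
  intro k
  rw [C_add_C_mul_X_mul_C_add_C_mul_X_sub_C_mul_X]
  have hd : 0 ≤ d := ha.trans had
  have hda : 0 ≤ d - a := sub_nonneg.2 had
  have hab : 0 ≤ b * d - a * b := by nlinarith
  refine coeff_C_add_C_mul_X_add_C_mul_X_sq_nonneg ?_ ?_ ?_ k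
  · positivity
  · have middle : (d * i + a * b) * (d * (i + 1) + b * d - a * b) +
        (d * i + b * d - a * b) * (d * (i + 1) + a * b) - d ^ 2 * (i + 1) * (i + b) =
        d ^ 2 * i * (i + 1 + b) + 2 * (a * b) * (b * (d - a)) := by ring
    rw [middle]
    positivity
  · have : 0 ≤ d * i := by positivity
    exact mul_nonneg (by linarith) (by linarith)
end

section
/- For all real numbers a, b, d with b ≥ 0 and d ≥ a ≥ 0, and every integer i ≥ 0: (di+ab)(di+d+bd−ab) + (di+bd−ab)(di+d+ab) − d²(i+1)(i+b) ≥ 0. -/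
/-! After expanding, the `q`-coefficient collapses to `(d i)² + d²(1 + b) i + 2ab²(d - a)`,
a sum of three nonnegative terms. -/

lemma q_coeff_eq {R : Type*} [CommRing R] (a b d x : R) :
    (d * x + a * b) * (d * x + d + b * d - a * b) +
        (d * x + b * d - a * b) * (d * x + d + a * b) - d ^ 2 * (x + 1) * (x + b) =
      (d * x) ^ 2 + d ^ 2 * (1 + b) * x + 2 * a * b ^ 2 * (d - a) := by
  ring

/-- The `q`-coefficient of `s_i(q) s_{i+1}(q) - t_{i+1}(q)` is nonnegative. -/
theorem stmt2 (a b d : ℝ) (hb : 0 ≤ b) (ha : 0 ≤ a) (had : a ≤ d) (i : ℕ) :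
    0 ≤ (d * i + a * b) * (d * i + d + b * d - a * b) +
        (d * i + b * d - a * b) * (d * i + d + a * b) -
        d ^ 2 * (i + 1) * (i + b) := by
  rw [q_coeff_eq]
  have h_linear : 0 ≤ d ^ 2 * (1 + b) * i := by positivity
  have h_const : 0 ≤ 2 * a * b ^ 2 * (d - a) :=
    mul_nonneg (by positivity) (sub_nonneg.2 had)
  have h_square : 0 ≤ (d * i) ^ 2 := sq_nonneg _
  linarith
end
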